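/- arXiv:1505.05194 — 2 statements merged into one kernel-verified Lean document; each statement's English description precedes it below -/
import Mathlib

section
/- Every monic first-order differential operator on the superline has the form M_φ: for every a ∈ A there exists an invertible φ ∈ A with Dφ = aφ, so that D − a = M_φ = D − (Dφ)φ⁻¹. Moreover, if a is odd then φ can be chosen even (and invertible). -/
noncomputable section
set_option synthInstance.maxHeartbeats 1000000
set_option maxHeartbeats 1000000

open TrivSqZeroExt

/-- Smooth real functions on the line, as a subalgebra of `ℝ → ℝ`. -/
def SmoothR : Subalgebra ℝ (ℝ → ℝ) where
  carrier := {f | ContDiff ℝ (⊤ : ℕ∞) f}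
  mul_mem' := fun {a b} (ha : ContDiff ℝ (⊤ : ℕ∞) a) (hb : ContDiff ℝ (⊤ : ℕ∞) b) => ha.mul hb
  add_mem' := fun {a b} (ha : ContDiff ℝ (⊤ : ℕ∞) a) (hb : ContDiff ℝ (⊤ : ℕ∞) b) => ha.add hb
  algebraMap_mem' := fun c => show ContDiff ℝ (⊤ : ℕ∞) (fun _ => c) from contDiff_const

lemma SmoothR.contDiff (f : SmoothR) : ContDiff ℝ (⊤ : ℕ∞) (f : ℝ → ℝ) := f.2

lemma SmoothR.differentiable (f : SmoothR) : Differentiable ℝ (f : ℝ → ℝ) :=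
  (SmoothR.contDiff f).differentiable (by simp)

/-- The ring `A` of superline functions: `f = f₀ + ξ f₁`. -/
abbrev SuperA : Type := TrivSqZeroExt SmoothR SmoothR


/-- Differentiation `f ↦ f′` on smooth functions, as an ℝ-linear map. -/
def derivSm : SmoothR →ₗ[ℝ] SmoothR where
  toFun f := ⟨deriv (f : ℝ → ℝ), (contDiff_infty_iff_deriv.mp (SmoothR.contDiff f)).2⟩
  map_add' f g := by
    ext x
    exact deriv_add ((SmoothR.differentiable f) x) ((SmoothR.differentiable g) x)
  map_smul' c f := by
    ext x
    have h := deriv_const_smul (f := (f : ℝ → ℝ)) c ((SmoothR.differentiable f) x)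
    have : deriv (c • (f : ℝ → ℝ)) x = c • deriv (f : ℝ → ℝ) x := by
      simpa [Pi.smul_def] using h
    simp_all

/-- The odd vector field `D = ∂_ξ + ξ ∂_x`, i.e. `D(f₀ + ξ f₁) = f₁ + ξ f₀′`. -/
def D : Module.End ℝ SuperA where
  toFun f := inl (snd f) + inr (derivSm (fst f))
  map_add' f g := by apply TrivSqZeroExt.ext <;> simp
  map_smul' c f := by apply TrivSqZeroExt.ext <;> simp

/-- Multiplication by `a ∈ A` as an ℝ-linear endomorphism of `A`. -/
def mulOp (a : SuperA) : Module.End ℝ SuperA := LinearMap.mulLeft ℝ a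

/-- `L` is a differential operator on the superline of order `≤ m`:
`L = a_m D^m + ⋯ + a₀`. -/
def IsOpOfOrderLE (L : Module.End ℝ SuperA) (m : ℕ) : Prop :=
  ∃ a : Fin (m + 1) → SuperA, L = ∑ i : Fin (m + 1), mulOp (a i) * D ^ (i : ℕ)

/-- `L` is a differential operator on the superline (of some order). -/
def IsDiffOp (L : Module.End ℝ SuperA) : Prop := ∃ m, IsOpOfOrderLE L m

/-- `L` is a differential operator of order `< m` (i.e. of order `≤ m − 1`;
for `m = 0` this means `L = 0`). -/
def IsOpOfOrderLT (L : Module.End ℝ SuperA) (m : ℕ) : Prop :=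
  ∃ a : Fin m → SuperA, L = ∑ i : Fin m, mulOp (a i) * D ^ (i : ℕ)

/-- `L` is a nondegenerate operator of order `m`: the top coefficient `a_m`
is invertible in `A`. -/
def IsNondegOfOrder (L : Module.End ℝ SuperA) (m : ℕ) : Prop :=
  ∃ a : Fin (m + 1) → SuperA, IsUnit (a (Fin.last m)) ∧
    L = ∑ i : Fin (m + 1), mulOp (a i) * D ^ (i : ℕ)

/-- `L` is a monic operator of order `m`: the top coefficient `a_m` equals `1`. -/
def IsMonicOfOrder (L : Module.End ℝ SuperA) (m : ℕ) : Prop :=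
  ∃ a : Fin (m + 1) → SuperA, a (Fin.last m) = 1 ∧
    L = ∑ i : Fin (m + 1), mulOp (a i) * D ^ (i : ℕ)

/-- `f = f₀ + ξ f₁` is even iff `f₁ = 0`. -/
def SuperA.IsEven (f : SuperA) : Prop := snd f = 0

/-- `f = f₀ + ξ f₁` is odd iff `f₀ = 0`. -/
def SuperA.IsOdd (f : SuperA) : Prop := fst f = 0

/-- `f = f₀ + ξ f₁` is constant iff `f₁ = 0` and `f₀` is a constant function. -/
def SuperA.IsConstant (f : SuperA) : Prop :=
  snd f = 0 ∧ ∃ c : ℝ, ∀ x : ℝ, ((fst f : SmoothR) : ℝ → ℝ) x = c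

/-- The first-order operator `M_φ = D − (Dφ)φ⁻¹ = φ ∘ D ∘ φ⁻¹`. -/
def Mphi (φ : SuperA) : Module.End ℝ SuperA := D - mulOp (D φ * Ring.inverse φ)


open intervalIntegral in
lemma exists_exp_ode (g : SmoothR) :
    ∃ h hinv : SmoothR, h * hinv = 1 ∧
      ∀ x, deriv (h : ℝ → ℝ) x = (g : ℝ → ℝ) x * (h : ℝ → ℝ) x := by
  have hgs : ContDiff ℝ (⊤ : ℕ∞) (g : ℝ → ℝ) := g.2
  have hg : Continuous (g : ℝ → ℝ) := hgs.continuous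
  set F : ℝ → ℝ := fun x => ∫ t in (0:ℝ)..x, (g : ℝ → ℝ) t with hF
  have hd : ∀ x, HasDerivAt F ((g : ℝ → ℝ) x) x := fun x =>
    integral_hasDerivAt_right (hg.intervalIntegrable _ _)
      (hg.stronglyMeasurableAtFilter _ _) hg.continuousAt
  have hderiv : deriv F = (g : ℝ → ℝ) := funext fun x => (hd x).deriv
  have hFs : ContDiff ℝ (⊤ : ℕ∞) F :=
    contDiff_infty_iff_deriv.mpr ⟨fun x => (hd x).differentiableAt, hderiv ▸ hgs⟩
  refine ⟨⟨fun x => Real.exp (F x), Real.contDiff_exp.comp hFs⟩,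
    ⟨fun x => Real.exp (-F x), Real.contDiff_exp.comp hFs.neg⟩, ?_, ?_⟩
  · ext x
    exact (Real.exp_add _ _).symm.trans (by simp)
  · intro x
    have : HasDerivAt (fun x => Real.exp (F x)) (Real.exp (F x) * (g : ℝ → ℝ) x) x :=
      (Real.hasDerivAt_exp (F x)).comp x (hd x)
    simpa [mul_comm] using this.deriv

/-- every monic first-order operator `D − a` has the form `M_φ`:
there is an invertible `φ` with `Dφ = aφ`, and hence `D − a = M_φ`; if `a` is
odd then `φ` can be chosen even. -/
theorem monic_first_order_is_Mphi (a : SuperA) :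
    (∃ φ : SuperA, IsUnit φ ∧ D φ = a * φ ∧ D - mulOp a = Mphi φ) ∧
    (SuperA.IsOdd a →
      ∃ φ : SuperA, IsUnit φ ∧ SuperA.IsEven φ ∧ D φ = a * φ ∧ D - mulOp a = Mphi φ) := by
  have key : ∃ φ : SuperA, IsUnit φ ∧ snd φ = fst a * fst φ ∧ D φ = a * φ ∧
      D - mulOp a = Mphi φ := by
    obtain ⟨h, hinv, hmul, hode⟩ := exists_exp_ode (fst a * fst a + snd a)
    have hderivSm : derivSm h = (fst a * fst a + snd a) * h := by
      apply Subtype.ext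
      funext x
      have := hode x
      simpa [derivSm] using this
    set φ : SuperA := inl h + inr (fst a * h) with hφ
    have hfst : fst φ = h := by simp [hφ]
    have hsnd : snd φ = fst a * h := by simp [hφ]
    have hu : IsUnit φ := by
      rw [isUnit_iff_isUnit_fst, hfst]
      exact IsUnit.of_mul_eq_one _ hmul
    have hD : D φ = a * φ := by
      apply TrivSqZeroExt.ext
      · simp [D, hfst, hsnd, fst_mul, mul_comm]
      · simp only [D, LinearMap.coe_mk, AddHom.coe_mk, snd_add, snd_inl, snd_inr, zero_add,
          snd_mul, hfst, hsnd, hderivSm, smul_eq_mul, op_smul_eq_mul]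
        ring
    refine ⟨φ, hu, by rw [hfst, hsnd], hD, ?_⟩
    have hcoef : D φ * Ring.inverse φ = a := by
      rw [hD, mul_assoc, Ring.mul_inverse_cancel _ hu, mul_one]
    rw [Mphi, hcoef]
  obtain ⟨φ, hu, hsnd, hD, hM⟩ := key
  refine ⟨⟨φ, hu, hD, hM⟩, fun ho => ⟨φ, hu, ?_, hD, hM⟩⟩
  rw [SuperA.IsEven, hsnd, ho, zero_mul]


end
end

section
/- Bézout-type divisibility: let L be a nondegenerate differential operator of order m ≥ 1 on the superline and let φ ∈ A be an invertible even function with Lφ = 0. Then L is divisible from the right by M_φ: there exists a nondegenerate differential operator L′ of order m−1 such that L = L′∘M_φ. -/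
noncomputable section
set_option synthInstance.maxHeartbeats 1000000
set_option maxHeartbeats 1000000

open TrivSqZeroExt

lemma mulOp_apply (a f : SuperA) : mulOp a f = a * f := rfl

lemma mulOp_mul (a b : SuperA) : mulOp (a * b) = mulOp a * mulOp b :=
  LinearMap.ext fun f => by simp [mulOp_apply, Module.End.mul_apply, mul_assoc]

lemma mulOp_add (a b : SuperA) : mulOp (a + b) = mulOp a + mulOp b :=
  LinearMap.ext fun f => by simp [mulOp_apply, add_mul]

lemma mulOp_zero : mulOp 0 = 0 :=
  LinearMap.ext fun f => by simp [mulOp_apply]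

lemma mulOp_one : mulOp 1 = 1 :=
  LinearMap.ext fun f => by simp [mulOp_apply]

lemma fst_D (f : SuperA) : fst (D f) = snd f := by simp [D]
lemma snd_D (f : SuperA) : snd (D f) = derivSm (fst f) := by simp [D]

lemma derivSm_mul (f g : SmoothR) : derivSm (f * g) = derivSm f * g + f * derivSm g := by
  ext x
  have : deriv ((f : ℝ → ℝ) * (g : ℝ → ℝ)) x =
      deriv (f : ℝ → ℝ) x * (g : ℝ → ℝ) x + (f : ℝ → ℝ) x * deriv (g : ℝ → ℝ) x :=
    deriv_mul (SmoothR.differentiable f x) (SmoothR.differentiable g x)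
  simpa [derivSm] using this

def sigmaA (a : SuperA) : SuperA := inl (fst a) - inr (snd a)

lemma sigmaA_one : sigmaA 1 = 1 := by simp [sigmaA]
lemma D_mulOp (a : SuperA) : D * mulOp a = mulOp (D a) + mulOp (sigmaA a) * D :=
  LinearMap.ext fun f => by
    apply TrivSqZeroExt.ext
    · simp only [mulOp_apply, Module.End.mul_apply, LinearMap.add_apply, fst_add, fst_mul, snd_mul,
        D, sigmaA, LinearMap.coe_mk, AddHom.coe_mk, fst_inl, snd_inl, fst_inr, snd_inr,
        fst_sub, snd_sub, smul_eq_mul, op_smul_eq_mul]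
      ring
    · simp only [mulOp_apply, Module.End.mul_apply, LinearMap.add_apply, fst_add, snd_add, fst_mul, snd_mul,
        D, sigmaA, LinearMap.coe_mk, AddHom.coe_mk, fst_inl, snd_inl, fst_inr, snd_inr,
        fst_sub, snd_sub, smul_eq_mul, op_smul_eq_mul, derivSm_mul, map_add]
      ring
/-- Remainder sequence for dividing `D^k` by `D - mulOp u`. -/
def rA (u : SuperA) : ℕ → SuperA
  | 0 => 1
  | k + 1 => sigmaA (rA u k) * u + D (rA u k)

/-- Quotient sequence for dividing `D^k` by `D - mulOp u`. -/
def qOp (u : SuperA) : ℕ → Module.End ℝ SuperA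
  | 0 => 0
  | k + 1 => D * qOp u k + mulOp (sigmaA (rA u k))
lemma Dpow_eq (u : SuperA) (M : Module.End ℝ SuperA) (hM : (D : Module.End ℝ SuperA) = M + mulOp u) (k : ℕ) :
    (D : Module.End ℝ SuperA) ^ k = qOp u k * M + mulOp (rA u k) := by
  induction k with
  | zero => simp [qOp, rA, mulOp_one]
  | succ k ih =>
    rw [pow_succ', ih]
    simp only [qOp, rA, mulOp_add, mulOp_mul, D_mulOp, mul_add, add_mul, mul_assoc]
    have h2 : mulOp (sigmaA (rA u k)) * D
        = mulOp (sigmaA (rA u k)) * M + mulOp (sigmaA (rA u k)) * mulOp u := by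
      rw [hM, mul_add]
    rw [h2]; abel
lemma pad_sum (N : ℕ) (d : ℕ → SuperA) :
    ∑ j ∈ Finset.range (N+1), mulOp (if j < N then d j else 0) * D ^ j
      = ∑ j ∈ Finset.range N, mulOp (d j) * D ^ j := by
  rw [Finset.sum_range_succ, if_neg (lt_irrefl N), mulOp_zero, zero_mul, add_zero]
  exact Finset.sum_congr rfl fun j hj => by rw [if_pos (Finset.mem_range.mp hj)]

lemma qOp_rep (u : SuperA) : ∀ k : ℕ, ∃ c : ℕ → SuperA,
    qOp u (k+1) = ∑ j ∈ Finset.range (k+1), mulOp (c j) * D ^ j ∧ c k = 1 := by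
  intro k
  induction k with
  | zero =>
    refine ⟨fun _ => 1, ?_, rfl⟩
    simp [qOp, rA, sigmaA_one, mulOp_one]
  | succ k ih =>
    obtain ⟨c, hc, hck⟩ := ih
    refine ⟨fun j => (if j < k+1 then D (c j) else 0)
      + (if j = 0 then sigmaA (rA u (k+1)) else sigmaA (c (j-1))), ?_, ?_⟩
    · have expand : qOp u (k+2) = D * qOp u (k+1) + mulOp (sigmaA (rA u (k+1))) := rfl
      have step : ∀ j : ℕ, D * (mulOp (c j) * D ^ j)
          = mulOp (D (c j)) * D ^ j + mulOp (sigmaA (c j)) * D ^ (j+1) := fun j => by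
        rw [← mul_assoc, D_mulOp, add_mul, mul_assoc, ← pow_succ']
      calc qOp u (k+2)
          = (∑ j ∈ Finset.range (k+1), (mulOp (D (c j)) * D ^ j
              + mulOp (sigmaA (c j)) * D ^ (j+1))) + mulOp (sigmaA (rA u (k+1))) := by
            rw [expand, hc, Finset.mul_sum]
            simp only [step]
        _ = (∑ j ∈ Finset.range (k+2), mulOp (if j < k+1 then D (c j) else 0) * D ^ j)
            + (∑ j ∈ Finset.range (k+2),
                mulOp (if j = 0 then sigmaA (rA u (k+1)) else sigmaA (c (j-1))) * D ^ j) := by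
            rw [Finset.sum_add_distrib, pad_sum (k+1) (fun j => D (c j)),
              Finset.sum_range_succ' _ (k+1)]
            simp only [Nat.succ_ne_zero, if_false, Nat.add_sub_cancel, eq_self_iff_true, if_true,
              pow_zero, mul_one]
            abel
        _ = ∑ j ∈ Finset.range (k+2), mulOp ((if j < k+1 then D (c j) else 0)
              + (if j = 0 then sigmaA (rA u (k+1)) else sigmaA (c (j-1)))) * D ^ j := by
            rw [← Finset.sum_add_distrib]
            exact Finset.sum_congr rfl fun j _ => by rw [mulOp_add, add_mul]
    · simp [hck, sigmaA_one]
lemma mulOp_sum {ι : Type*} (s : Finset ι) (f : ι → SuperA) :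
    mulOp (∑ i ∈ s, f i) = ∑ i ∈ s, mulOp (f i) :=
  map_sum (AddMonoidHom.mk' mulOp mulOp_add) f s

lemma tail_rep (u : SuperA) : ∀ (N : ℕ) (b : ℕ → SuperA), ∃ d : ℕ → SuperA,
    ∑ i ∈ Finset.range (N+1), mulOp (b i) * qOp u i
      = ∑ j ∈ Finset.range N, mulOp (d j) * D ^ j := by
  intro N
  induction N with
  | zero =>
    intro b
    refine ⟨fun _ => 0, ?_⟩
    simp [qOp]
  | succ N ih =>
    intro b
    obtain ⟨d, hd⟩ := ih b
    obtain ⟨c, hc, -⟩ := qOp_rep u N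
    refine ⟨fun j => (if j < N then d j else 0) + b (N+1) * c j, ?_⟩
    rw [Finset.sum_range_succ, hd, hc, Finset.mul_sum]
    have h1 : ∀ j : ℕ, mulOp (b (N+1)) * (mulOp (c j) * D ^ j)
        = mulOp (b (N+1) * c j) * D ^ j := fun j => by rw [mulOp_mul, mul_assoc]
    simp only [h1]
    rw [← pad_sum N d, ← Finset.sum_add_distrib]
    exact Finset.sum_congr rfl fun j _ => by rw [mulOp_add, add_mul]
lemma div_rep (u : SuperA) (M : Module.End ℝ SuperA)
    (hM : (D : Module.End ℝ SuperA) = M + mulOp u) (N : ℕ) (b : ℕ → SuperA) :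
    ∑ i ∈ Finset.range N, mulOp (b i) * D ^ i
      = (∑ i ∈ Finset.range N, mulOp (b i) * qOp u i) * M
        + mulOp (∑ i ∈ Finset.range N, b i * rA u i) := by
  rw [Finset.sum_mul, mulOp_sum, ← Finset.sum_add_distrib]
  refine Finset.sum_congr rfl fun i _ => ?_
  rw [Dpow_eq u M hM i, mul_add, ← mul_assoc, ← mulOp_mul]

lemma main_rep (u : SuperA) (N : ℕ) (b : ℕ → SuperA) :
    ∃ g : ℕ → SuperA, g N = b (N+1) ∧
      ∑ i ∈ Finset.range (N+2), mulOp (b i) * qOp u i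
        = ∑ j ∈ Finset.range (N+1), mulOp (g j) * D ^ j := by
  obtain ⟨d, hd⟩ := tail_rep u N b
  obtain ⟨e, he, hen⟩ := qOp_rep u N
  refine ⟨fun j => (if j < N then d j else 0) + b (N+1) * e j, ?_, ?_⟩
  · simp [hen]
  · rw [Finset.sum_range_succ, hd, he, Finset.mul_sum]
    have h1 : ∀ j : ℕ, mulOp (b (N+1)) * (mulOp (e j) * D ^ j)
        = mulOp (b (N+1) * e j) * D ^ j := fun j => by rw [mulOp_mul, mul_assoc]
    simp only [h1]
    rw [← pad_sum N d, ← Finset.sum_add_distrib]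
    exact Finset.sum_congr rfl fun j _ => by rw [mulOp_add, add_mul]

/-- Bézout-type divisibility: if `L` is nondegenerate of order
`m ≥ 1` and `φ` is an invertible even function with `Lφ = 0`, then
`L = L′ ∘ M_φ` for some nondegenerate `L′` of order `m − 1`. -/
theorem bezout_right_divisibility
    (L : Module.End ℝ SuperA) (m : ℕ) (hm : 1 ≤ m) (hL : IsNondegOfOrder L m)
    (φ : SuperA) (hinv : IsUnit φ) (heven : SuperA.IsEven φ) (hker : L φ = 0) :
    ∃ L' : Module.End ℝ SuperA, IsNondegOfOrder L' (m - 1) ∧ L = L' * Mphi φ := by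
  obtain ⟨n, rfl⟩ : ∃ n, m = n + 1 := ⟨m - 1, (Nat.succ_pred_eq_of_pos hm).symm⟩
  obtain ⟨a, haunit, hLeq⟩ := hL
  obtain ⟨a', ha'⟩ : ∃ a' : ℕ → SuperA, ∀ i : Fin (n+2), a' (i : ℕ) = a i :=
    ⟨fun i => if h : i < n + 2 then a ⟨i, h⟩ else 0, fun i => by simp [i.isLt]⟩
  obtain ⟨u, hu⟩ : ∃ u : SuperA, u = D φ * Ring.inverse φ := ⟨_, rfl⟩
  have hMphi : Mphi φ = D - mulOp u := by rw [Mphi, hu]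
  have hDM : (D : Module.End ℝ SuperA) = Mphi φ + mulOp u := by rw [hMphi]; abel
  have hL2 : L = ∑ i ∈ Finset.range (n+2), mulOp (a' i) * D ^ i := by
    rw [hLeq, Finset.sum_range]
    exact Finset.sum_congr rfl fun i _ => by rw [ha']
  have key : L = (∑ i ∈ Finset.range (n+2), mulOp (a' i) * qOp u i) * Mphi φ
      + mulOp (∑ i ∈ Finset.range (n+2), a' i * rA u i) := by
    rw [hL2]; exact div_rep u (Mphi φ) hDM (n+2) a'
  have hMphiφ : Mphi φ φ = 0 := by
    rw [hMphi, LinearMap.sub_apply, mulOp_apply, hu, mul_assoc,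
      Ring.inverse_mul_cancel _ hinv, mul_one, sub_self]
  have hcc0 : (∑ i ∈ Finset.range (n+2), a' i * rA u i) = 0 := by
    have h1 : (∑ i ∈ Finset.range (n+2), a' i * rA u i) * φ = 0 := by
      have h2 := hker
      rw [key] at h2
      simpa [LinearMap.add_apply, Module.End.mul_apply, hMphiφ, mulOp_apply] using h2
    calc (∑ i ∈ Finset.range (n+2), a' i * rA u i)
        = (∑ i ∈ Finset.range (n+2), a' i * rA u i) * (φ * Ring.inverse φ) := by
          rw [Ring.mul_inverse_cancel _ hinv, mul_one]
      _ = ((∑ i ∈ Finset.range (n+2), a' i * rA u i) * φ) * Ring.inverse φ :=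
          (mul_assoc _ _ _).symm
      _ = 0 := by rw [h1, zero_mul]
  rw [hcc0, mulOp_zero, add_zero] at key
  simp only [Nat.add_sub_cancel]
  refine ⟨_, ?_, key⟩
  obtain ⟨g, hgtop, hgrep⟩ := main_rep u n a'
  have h3 := ha' (Fin.last (n+1))
  rw [Fin.val_last] at h3
  refine ⟨fun j => g (j : ℕ), ?_, ?_⟩
  · show IsUnit (g ((Fin.last n : Fin (n+1)) : ℕ))
    rw [Fin.val_last, hgtop, h3]
    exact haunit
  · rw [hgrep, Finset.sum_range]

end
end
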